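/- (Strips Theorem, one-sided tape) Let f be a partial function on natural numbers computed by a one-sided Turing machine with binary input/output convention (the tape is infinite to the left and bounded on the right, the natural number input is written in binary on the rightmost cells, and the output is the binary number on the tape at halting). If f halts on input i and n is the index of the left-most cell visited during the computation on input i, then for every natural number x, f(x·2^(n+1) + i) = x·2^(n+1) + f(i). In particular, f restricted to the arithmetic progression {x·2^(n+1) + i : x ∈ ℕ} is of the form y ↦ y + a with a = f(i) − i. -/

import Mathlib

/-- A one-sided Turing machine: transition table mapping (state, color) to
(written color, move-right?, next state), plus an initial state.
The tape is infinite to the left: cells are indexed by `ℕ` with cell 0 the rightmost;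
moving right decreases the index, and moving right from cell 0 halts the machine. -/
structure TM (σ : Type) where
  trans : σ → Bool → Bool × Bool × σ
  init : σ

/-- A configuration: current state, head position, tape contents. -/
structure Cfg (σ : Type) where
  state : σ
  pos : ℕ
  tape : ℕ → Bool

/-- One step of the machine: either a new configuration, or (if the head moves
right off cell 0) the final tape. -/
def TM.stepA {σ : Type} (M : TM σ) (c : Cfg σ) : Sum (Cfg σ) (ℕ → Bool) :=
  let r := M.trans c.state (c.tape c.pos)
  let tape' := Function.update c.tape c.pos r.1
  if r.2.1 then
    if c.pos = 0 then Sum.inr tape'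
    else Sum.inl ⟨r.2.2, c.pos - 1, tape'⟩
  else Sum.inl ⟨r.2.2, c.pos + 1, tape'⟩

/-- Running the machine for `t` steps from a configuration; once halted, the
final tape is kept. -/
def TM.run {σ : Type} (M : TM σ) (c : Cfg σ) : ℕ → Sum (Cfg σ) (ℕ → Bool)
  | 0 => Sum.inl c
  | t + 1 =>
    match M.run c t with
    | Sum.inl c' => M.stepA c'
    | Sum.inr tp => Sum.inr tp

/-- Initial configuration on binary input `i`: head at cell 0, cell `j` holds the
`j`-th binary digit of `i`. -/
def initCfg {σ : Type} (M : TM σ) (i : ℕ) : Cfg σ :=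
  ⟨M.init, 0, fun j => i.testBit j⟩

/-- `M` halts on binary input `i` with binary output `r`. -/
def ComputesOn {σ : Type} (M : TM σ) (i r : ℕ) : Prop :=
  ∃ t tp, M.run (initCfg M i) t = Sum.inr tp ∧ ∀ j, tp j = r.testBit j

/-- Initial configuration on unary input `x`: a block of `x+1` black cells at the
right end of the tape. -/
def unaryCfg {σ : Type} (M : TM σ) (x : ℕ) : Cfg σ :=
  ⟨M.init, 0, fun j => decide (j < x + 1)⟩

/-!
While the head stays on cells `0..n`, the machine never reads the cells beyond `n`, so
overwriting them commutes with every step (`TM.run_splice`). Overwriting them with their own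
contents shows that the halting tape on input `i` still agrees with `i` beyond `n`, so `i` and
`r` have the same bits from `n + 1` on. Overwriting them with the high bits of
`x * 2 ^ (n + 1) + i` turns the run on `i` into the run on that input, whose output has the
low bits of `r` and the high bits of `x * 2 ^ (n + 1) + i`, i.e. those of
`x * 2 ^ (n + 1) + r`.
-/

def spliceTape (n : ℕ) (t g : ℕ → Bool) : ℕ → Bool :=
  fun j => if j ≤ n then t j else g j

@[simp]
theorem spliceTape_self (n : ℕ) (t : ℕ → Bool) : spliceTape n t t = t := by
  funext j
  simp [spliceTape]

theorem spliceTape_update {n p : ℕ} (hp : p ≤ n) (t g : ℕ → Bool) (v : Bool) :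
    spliceTape n (Function.update t p v) g = Function.update (spliceTape n t g) p v := by
  funext j
  by_cases hj : j = p
  · subst hj
    simp [spliceTape, hp]
  · simp [spliceTape, Function.update_of_ne hj]

def Cfg.splice {σ : Type} (n : ℕ) (g : ℕ → Bool) (c : Cfg σ) : Cfg σ :=
  ⟨c.state, c.pos, spliceTape n c.tape g⟩

@[simp]
theorem Cfg.splice_self {σ : Type} (n : ℕ) (c : Cfg σ) : c.splice n c.tape = c := by
  simp [Cfg.splice]

namespace TM

variable {σ : Type} (M : TM σ) {n : ℕ} (g : ℕ → Bool)

theorem stepA_splice {c : Cfg σ} (hc : c.pos ≤ n) :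
    M.stepA (c.splice n g) = (M.stepA c).map (Cfg.splice n g) (spliceTape n · g) := by
  have hread : spliceTape n c.tape g c.pos = c.tape c.pos := if_pos hc
  simp only [stepA, Cfg.splice, hread]
  split_ifs <;> simp [Cfg.splice, spliceTape_update hc]

theorem run_splice {c : Cfg σ} (hc : ∀ t c', M.run c t = Sum.inl c' → c'.pos ≤ n) (t : ℕ) :
    M.run (c.splice n g) t = (M.run c t).map (Cfg.splice n g) (spliceTape n · g) := by
  induction t with
  | zero => rfl
  | succ t ih =>
    rcases hrun : M.run c t with c' | tp
    · simp only [run, ih, hrun, Sum.map_inl, stepA_splice M g (hc t c' hrun)]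
    · simp only [run, ih, hrun, Sum.map_inr]

theorem tape_eq_of_run_eq_inr {t j : ℕ} {c : Cfg σ} {tp : ℕ → Bool}
    (hc : ∀ t c', M.run c t = Sum.inl c' → c'.pos ≤ n)
    (hrun : M.run c t = Sum.inr tp) (hj : n < j) : tp j = c.tape j := by
  have hsplice := M.run_splice c.tape hc t
  rw [Cfg.splice_self, hrun, Sum.map_inr, Sum.inr.injEq] at hsplice
  simpa [spliceTape, Nat.not_le_of_lt hj] using congrFun hsplice j

end TM

theorem Nat.testBit_eq_of_mod_two_pow_eq {a b k j : ℕ} (h : a % 2 ^ k = b % 2 ^ k)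
    (hj : j < k) : a.testBit j = b.testBit j := by
  simpa [hj] using congrArg (Nat.testBit · j) h

theorem Nat.div_two_pow_eq_div_two_pow_iff {a b k : ℕ} :
    a / 2 ^ k = b / 2 ^ k ↔ ∀ j, k ≤ j → a.testBit j = b.testBit j := by
  constructor
  · intro h j hj
    obtain ⟨d, rfl⟩ := Nat.exists_eq_add_of_le hj
    rw [add_comm k d, ← Nat.testBit_div_two_pow, ← Nat.testBit_div_two_pow, h]
  · intro h
    refine Nat.eq_of_testBit_eq fun j => ?_
    simp only [Nat.testBit_div_two_pow]
    exact h _ (Nat.le_add_left k j)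

/-- (Strips Theorem, one-sided tape.) If a one-sided Turing machine with binary
input/output convention halts on input `i` with output `r`, and every cell visited
during that computation has index at most `n`, then for every `x` the machine halts
on input `x·2^(n+1) + i` with output `x·2^(n+1) + r`; in particular, on the strip
`{x·2^(n+1) + i : x ∈ ℕ}` the computed function is of the form `y ↦ y + a` with
`a = f(i) − i`. -/
theorem strips_theorem_one_sided {σ : Type} (M : TM σ) (i r n : ℕ)
    (hhalt : ComputesOn M i r)
    (hvisited : ∀ t c, M.run (initCfg M i) t = Sum.inl c → c.pos ≤ n) :
    ∀ x : ℕ, ComputesOn M (x * 2 ^ (n + 1) + i) (x * 2 ^ (n + 1) + r) := by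
  intro x
  obtain ⟨t, tp, hrun, hout⟩ := hhalt
  have hlow : ∀ a j, j ≤ n → (x * 2 ^ (n + 1) + a).testBit j = a.testBit j := fun a j hj =>
    Nat.testBit_eq_of_mod_two_pow_eq (Nat.mul_add_mod_self_right x _ a) (Nat.lt_succ_of_le hj)
  have hdiv : ∀ a, (x * 2 ^ (n + 1) + a) / 2 ^ (n + 1) = x + a / 2 ^ (n + 1) := fun a => by
    rw [Nat.mul_comm, Nat.mul_add_div (Nat.two_pow_pos _)]
  have hhigh : i / 2 ^ (n + 1) = r / 2 ^ (n + 1) :=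
    Nat.div_two_pow_eq_div_two_pow_iff.2 fun j hj => by
      rw [← hout, M.tape_eq_of_run_eq_inr hvisited hrun hj]
      rfl
  have hinput : initCfg M (x * 2 ^ (n + 1) + i) =
      (initCfg M i).splice n (x * 2 ^ (n + 1) + i).testBit := by
    simp only [initCfg, Cfg.splice, Cfg.mk.injEq, true_and]
    funext j
    by_cases hj : j ≤ n <;> simp [spliceTape, hj, hlow]
  refine ⟨t, spliceTape n tp (x * 2 ^ (n + 1) + i).testBit, ?_, fun j => ?_⟩
  · rw [hinput, M.run_splice _ hvisited, hrun, Sum.map_inr]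
  by_cases hj : j ≤ n
  · simp [spliceTape, hj, hout, hlow]
  · simp only [spliceTape, if_neg hj]
    exact Nat.div_two_pow_eq_div_two_pow_iff.1 (by rw [hdiv, hdiv, hhigh]) j (by omega)
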